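/- Assume condition (SP_v): for every E ∈ ℝ the operator h_S + v_S(E,v) − E on ℓ²(S) is invertible. Then the coupled one-particle Hamiltonian h_v has no eigenvalues: for every E ∈ ℝ and every ψ ∈ 𝔥, h_v ψ = Eψ implies ψ = 0. -/

import Mathlib

/-!
Write an eigenvector as `(a, b)`. Along lead `j` the eigenvalue equation is the recurrence
`b(x) + b(x + 2) = λ_j b(x + 1)` with `λ_j = (v_j - E) / c_R`, plus a boundary condition at the
site `0_j` fed by `d_j ⟨φ_j, a⟩`. Since `b ∈ ℓ²`, a conserved quantity kills `b` on a lead with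
`|λ_j| ≤ 2`, while for `|λ_j| > 2` the lead carries a geometric sequence whose ratio `p_j` is the
root of `r² - λ_j r + 1` inside the unit disc. The resolvent of `h_{R,v}` at `E + iε` maps
`δ_{0_j}` to a geometric vector whose ratio tends to `p_j` as `ε ↓ 0`, and this identifies
`v_S(E) a` with the term `∑ d_j b_j(0) φ_j` of the sample equation, which therefore reads
`(h_S + v_S(E) - E) a = 0`. By (SP_v) `a = 0`; then every lead obeys a Dirichlet condition at the
boundary, and a decaying solution of it vanishes.
-/

noncomputable section
open Complex Filter MeasureTheory

/-- The Hilbert space `⊕_{j=1}^m ℓ²(ℕ)` of the leads, realized as `ℓ²(Fin m × ℕ)`. -/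
abbrev LeadSp (m : ℕ) : Type := lp (fun _ : Fin m × ℕ => ℂ) 2

/-- The Hilbert space `ℓ²(S)` of the finite sample. -/
abbrev SampSp (S : Type) [Fintype S] : Type := EuclideanSpace ℂ S

/-- The full one-particle Hilbert space `𝔥 = ℓ²(S) ⊕ 𝔥_R`. -/
abbrev FullSp (S : Type) [Fintype S] (m : ℕ) : Type := WithLp 2 (SampSp S × LeadSp m)

/-- Embedding of a pair into the full space. -/
def emb {S : Type} [Fintype S] {m : ℕ} (p : SampSp S × LeadSp m) : FullSp S m :=
  (WithLp.equiv 2 (SampSp S × LeadSp m)).symm p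

/-- Projection of the full space onto the sample component. -/
def prjS {S : Type} [Fintype S] {m : ℕ} (x : FullSp S m) : SampSp S :=
  ((WithLp.equiv 2 (SampSp S × LeadSp m)) x).1

/-- Projection of the full space onto the reservoir component. -/
def prjR {S : Type} [Fintype S] {m : ℕ} (x : FullSp S m) : LeadSp m :=
  ((WithLp.equiv 2 (SampSp S × LeadSp m)) x).2

/-- Kronecker delta at site `x` of lead `j`. -/
def deltaR {m : ℕ} (j : Fin m) (x : ℕ) : LeadSp m := lp.single 2 (j, x) (1 : ℂ)

/-- The set of thresholds `𝒯 = {v_j ± 2 c_R}`. -/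
def thresholds {m : ℕ} (v : Fin m → ℝ) (cR : ℝ) : Set ℝ :=
  {E : ℝ | ∃ j : Fin m, E = v j + 2 * cR ∨ E = v j - 2 * cR}

open scoped Topology ComplexConjugate ENNReal

namespace CharacteristicRoots

theorem exists_root_norm_lt_one {μ : ℂ} (hμ : μ.im ≠ 0) :
    ∃ r : ℂ, r * r - μ * r + 1 = 0 ∧ ‖r‖ < 1 := by
  obtain ⟨t, ht⟩ := IsAlgClosed.exists_pow_nat_eq (μ ^ 2 - 4) two_pos
  set r₁ := (μ + t) / 2
  set r₂ := (μ - t) / 2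
  have hprod : r₁ * r₂ = 1 := by simp only [r₁, r₂]; linear_combination -ht / 4
  have hsum : r₁ + r₂ = μ := by simp only [r₁, r₂]; ring
  have hroot : ∀ r, r = r₁ ∨ r = r₂ → r * r - μ * r + 1 = 0 := by
    rintro r (rfl | rfl) <;> rw [← hsum, ← hprod] <;> ring
  by_contra! hbig
  have h₁ := hbig r₁ (hroot r₁ (.inl rfl))
  have h₂ := hbig r₂ (hroot r₂ (.inr rfl))
  have hnorm : ‖r₁‖ * ‖r₂‖ = 1 := by rw [← norm_mul, hprod, norm_one]
  have hr₁ : ‖r₁‖ = 1 := by nlinarith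
  -- on the unit circle the reciprocal is the conjugate, so `μ = r₁ + conj r₁` would be real
  have hconj : r₂ = conj r₁ := by
    have hr₁conj : r₁ * conj r₁ = 1 := by
      rw [mul_conj, ← Complex.sq_norm, hr₁, one_pow, ofReal_one]
    exact mul_left_cancel₀ (norm_ne_zero_iff.mp (by rw [hr₁]; exact one_ne_zero))
      (hprod.trans hr₁conj.symm)
  apply hμ
  rw [← hsum, add_im, hconj, conj_im, add_neg_cancel]

/-- The root of `r ^ 2 - μ r + 1` inside the unit disc; a junk value `0` when `μ` is real. -/
def smallRoot (μ : ℂ) : ℂ :=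
  if h : μ.im ≠ 0 then (exists_root_norm_lt_one h).choose else 0

theorem smallRoot_spec {μ : ℂ} (h : μ.im ≠ 0) :
    smallRoot μ * smallRoot μ - μ * smallRoot μ + 1 = 0 ∧ ‖smallRoot μ‖ < 1 := by
  rw [smallRoot, dif_pos h]
  exact (exists_root_norm_lt_one h).choose_spec

theorem exists_real_roots_of_two_lt {lam : ℝ} (hlam : 2 < lam) :
    ∃ p q : ℝ, p + q = lam ∧ p * q = 1 ∧ 1 < q := by
  have hdisc : 0 ≤ lam ^ 2 - 4 := by nlinarith
  set t := √(lam ^ 2 - 4)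
  have ht : t ^ 2 = lam ^ 2 - 4 := Real.sq_sqrt hdisc
  refine ⟨(lam - t) / 2, (lam + t) / 2, by ring, by linear_combination -ht / 4, ?_⟩
  nlinarith [Real.sqrt_nonneg (lam ^ 2 - 4)]

theorem exists_real_roots_of_two_lt_abs {lam : ℝ} (hlam : 2 < |lam|) :
    ∃ p q : ℝ, p + q = lam ∧ p * q = 1 ∧ 1 < |q| := by
  rcases lt_abs.mp hlam with hpos | hneg
  · obtain ⟨p, q, hsum, hprod, hq⟩ := exists_real_roots_of_two_lt hpos
    exact ⟨p, q, hsum, hprod, hq.trans_le (le_abs_self q)⟩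
  · obtain ⟨p, q, hsum, hprod, hq⟩ := exists_real_roots_of_two_lt hneg
    refine ⟨-p, -q, by linarith, by linear_combination hprod, ?_⟩
    rwa [abs_neg, abs_of_pos (by linarith)]

theorem norm_sub_le_of_root {lam p q : ℝ} (hsum : p + q = lam) (hprod : p * q = 1)
    (hq : 1 < |q|) {μ r : ℂ} (hr : r * r - μ * r + 1 = 0) (hr1 : ‖r‖ < 1) :
    ‖r - p‖ ≤ ‖μ - lam‖ / (|q| - 1) := by
  have hfactor : (r - p) * (r - q) = (μ - lam) * r := by
    have hsum' : (p : ℂ) + q = lam := by exact_mod_cast hsum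
    have hprod' : (p : ℂ) * q = 1 := by exact_mod_cast hprod
    linear_combination hr + hprod' - r * hsum'
  have hq' : |q| - 1 ≤ ‖r - q‖ := by
    have := norm_sub_norm_le (q : ℂ) r
    rw [norm_sub_rev, norm_real, Real.norm_eq_abs] at this
    linarith
  rw [le_div_iff₀ (by linarith)]
  calc ‖r - p‖ * (|q| - 1) ≤ ‖r - p‖ * ‖r - q‖ := by gcongr
    _ = ‖μ - lam‖ * ‖r‖ := by rw [← norm_mul, hfactor, norm_mul]
    _ ≤ ‖μ - lam‖ := mul_le_of_le_one_right (norm_nonneg _) hr1.le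

theorem tendsto_smallRoot {lam p q : ℝ} (hsum : p + q = lam) (hprod : p * q = 1) (hq : 1 < |q|)
    {ι : Type*} {l : Filter ι} {μ : ι → ℂ} (hμ : Tendsto μ l (𝓝 (lam : ℂ)))
    (him : ∀ᶠ t in l, (μ t).im ≠ 0) : Tendsto (fun t => smallRoot (μ t)) l (𝓝 (p : ℂ)) := by
  rw [tendsto_iff_norm_sub_tendsto_zero]
  refine squeeze_zero' (.of_forall fun _ => norm_nonneg _) ?_
    (g := fun t => ‖μ t - lam‖ / (|q| - 1))
    (by simpa using (tendsto_iff_norm_sub_tendsto_zero.mp hμ).div_const (|q| - 1))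
  filter_upwards [him] with t ht
  exact norm_sub_le_of_root hsum hprod hq (smallRoot_spec ht).1 (smallRoot_spec ht).2

end CharacteristicRoots

namespace SecondOrderRecurrence

open CharacteristicRoots

def conservedQty (lam : ℝ) (u : ℕ → ℂ) (x : ℕ) : ℝ :=
  normSq (u (x + 1)) + normSq (u x) - lam * (u (x + 1) * conj (u x)).re

variable {lam : ℝ} {u : ℕ → ℂ}

theorem conservedQty_succ (hrec : ∀ x, u x + u (x + 2) = lam * u (x + 1)) (x : ℕ) :
    conservedQty lam u (x + 1) = conservedQty lam u x := by
  have h2 : u (x + 2) = lam * u (x + 1) - u x := by linear_combination hrec x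
  simp only [conservedQty, h2, normSq_apply, mul_re, mul_im, sub_re, sub_im, conj_re, conj_im,
    ofReal_re, ofReal_im]
  ring

theorem norm_succ_eq_of_conservedQty_eq_zero (hlam : |lam| ≤ 2) {x : ℕ}
    (hQ : conservedQty lam u x = 0) : ‖u (x + 1)‖ = ‖u x‖ := by
  have hre : |(u (x + 1) * conj (u x)).re| ≤ ‖u (x + 1)‖ * ‖u x‖ := by
    simpa [norm_mul] using abs_re_le_norm (u (x + 1) * conj (u x))
  have hcross : lam * (u (x + 1) * conj (u x)).re ≤ 2 * (‖u (x + 1)‖ * ‖u x‖) :=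
    calc lam * (u (x + 1) * conj (u x)).re ≤ |lam| * |(u (x + 1) * conj (u x)).re| := by
          rw [← abs_mul]; exact le_abs_self _
      _ ≤ 2 * (‖u (x + 1)‖ * ‖u x‖) := mul_le_mul hlam hre (abs_nonneg _) zero_le_two
  rw [conservedQty, ← Complex.sq_norm, ← Complex.sq_norm] at hQ
  nlinarith [sq_nonneg (‖u (x + 1)‖ - ‖u x‖)]

/-- The conserved quantity tends to `0`, and for `|lam| ≤ 2` its vanishing forces
`‖u (x + 1)‖ = ‖u x‖`; so `‖u x‖` is constant and tends to `0`. -/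
theorem eq_zero_of_abs_le_two (hlam : |lam| ≤ 2)
    (hrec : ∀ x, u x + u (x + 2) = lam * u (x + 1)) (hu : Tendsto u atTop (𝓝 0)) (x : ℕ) :
    u x = 0 := by
  have hQconst : ∀ x, conservedQty lam u x = conservedQty lam u 0 := fun x => by
    induction x with
    | zero => rfl
    | succ n ih => rw [conservedQty_succ hrec, ih]
  have hQlim : Tendsto (conservedQty lam u) atTop (𝓝 0) := by
    have hu1 : Tendsto (fun x => u (x + 1)) atTop (𝓝 0) := hu.comp (tendsto_add_atTop_nat 1)
    have := ((continuous_normSq.tendsto 0).comp hu1).add ((continuous_normSq.tendsto 0).comp hu)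
      |>.sub (((continuous_re.tendsto _).comp (hu1.mul ((continuous_conj.tendsto 0).comp hu)))
        |>.const_mul lam)
    unfold conservedQty
    simpa using this
  have hQ0 : conservedQty lam u 0 = 0 :=
    tendsto_nhds_unique (tendsto_const_nhds.congr fun x => (hQconst x).symm) hQlim
  have hnorm : ∀ x, ‖u x‖ = ‖u 0‖ := fun x => by
    induction x with
    | zero => rfl
    | succ n ih => rw [norm_succ_eq_of_conservedQty_eq_zero hlam (by rw [hQconst, hQ0]), ih]
  have hu0 : ‖u 0‖ = 0 :=
    tendsto_nhds_unique (tendsto_const_nhds.congr fun x => (hnorm x).symm)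
      (tendsto_norm_zero.comp hu)
  rw [← norm_eq_zero, hnorm, hu0]

/-- `u (x + 1) - r * u x` grows like `s ^ x`, so it vanishes if `u` decays. -/
theorem eq_geometric_of_tendsto_zero {r s : ℂ} (hrs : r * s = 1) (hs : 1 < ‖s‖)
    (hrec : ∀ x, u x + u (x + 2) = (r + s) * u (x + 1)) (hu : Tendsto u atTop (𝓝 0)) (x : ℕ) :
    u (x + 1) = r * u x := by
  set w : ℕ → ℂ := fun x => u (x + 1) - r * u x with hw
  have hstep : ∀ x, w (x + 1) = s * w x := fun x => by
    simp only [hw]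
    linear_combination hrec x + u x * hrs
  have hgeom : ∀ x, w x = s ^ x * w 0 := fun x => by
    induction x with
    | zero => simp
    | succ n ih => rw [hstep, ih, pow_succ]; ring
  have hwlim : Tendsto w atTop (𝓝 0) := by
    simpa using (hu.comp (tendsto_add_atTop_nat 1)).sub (hu.const_mul r)
  have hw0 : ‖w 0‖ ≤ 0 := ge_of_tendsto' (tendsto_norm_zero.comp hwlim) fun x => by
    rw [Function.comp_apply, hgeom x, norm_mul, norm_pow]
    exact le_mul_of_one_le_left (norm_nonneg _) (one_le_pow₀ hs.le)
  have := hgeom x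
  rw [norm_le_zero_iff.mp hw0, mul_zero] at this
  exact sub_eq_zero.mp this

theorem eq_zero_or_geometric (hrec : ∀ x, u x + u (x + 2) = lam * u (x + 1))
    (hu : Tendsto u atTop (𝓝 0)) :
    (∀ x, u x = 0) ∨
      ∃ p q : ℝ, p + q = lam ∧ p * q = 1 ∧ 1 < |q| ∧ ∀ x, u (x + 1) = p * u x := by
  rcases le_or_gt |lam| 2 with hband | hoff
  · exact .inl (eq_zero_of_abs_le_two hband hrec hu)
  obtain ⟨p, q, hsum, hprod, hq⟩ := exists_real_roots_of_two_lt_abs hoff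
  refine .inr ⟨p, q, hsum, hprod, hq, eq_geometric_of_tendsto_zero (s := q) ?_ ?_ ?_ hu⟩
  · exact_mod_cast hprod
  · rwa [norm_real, Real.norm_eq_abs]
  · intro x; rw [hrec x, ← hsum]; push_cast; ring

/-- `u 1 = lam * u 0` is the recurrence at `x = -1` with `u (-1) = 0`. -/
theorem eq_zero_of_dirichlet (hrec : ∀ x, u x + u (x + 2) = lam * u (x + 1))
    (hu : Tendsto u atTop (𝓝 0)) (h1 : u 1 = lam * u 0) (x : ℕ) : u x = 0 := by
  rcases eq_zero_or_geometric hrec hu with hzero | ⟨p, q, hsum, -, hq, hgeom⟩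
  · exact hzero x
  have hq0 : (q : ℂ) ≠ 0 := ofReal_ne_zero.mpr (abs_pos.mp (one_pos.trans hq))
  have hu0 : u 0 = 0 := by
    refine (mul_eq_zero.mp ?_).resolve_left hq0
    rw [← hsum] at h1
    push_cast at h1
    linear_combination hgeom 0 - h1
  induction x with
  | zero => exact hu0
  | succ n ih => rw [hgeom, ih, mul_zero]

theorem tendsto_boundary_mul_smallRoot (hrec : ∀ x, u x + u (x + 2) = lam * u (x + 1))
    (hu : Tendsto u atTop (𝓝 0)) {ι : Type*} {l : Filter ι} {μ : ι → ℂ}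
    (hμ : Tendsto μ l (𝓝 (lam : ℂ))) (him : ∀ᶠ t in l, (μ t).im ≠ 0) :
    Tendsto (fun t => (lam * u 0 - u 1) * smallRoot (μ t)) l (𝓝 (u 0)) := by
  rcases eq_zero_or_geometric hrec hu with hzero | ⟨p, q, hsum, hprod, hq, hgeom⟩
  · simpa [hzero] using tendsto_const_nhds
  have hlim : (lam * u 0 - u 1) * p = u 0 := by
    have hprod' : (p : ℂ) * q = 1 := by exact_mod_cast hprod
    rw [hgeom, ← hsum]
    push_cast
    linear_combination u 0 * hprod'
  simpa only [hlim] using (tendsto_smallRoot hsum hprod hq hμ him).const_mul (lam * u 0 - u 1)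

end SecondOrderRecurrence

open CharacteristicRoots SecondOrderRecurrence

theorem im_sub_div_ofReal_ne_zero {z : ℂ} (hz : z.im ≠ 0) (v : ℝ) {c : ℝ} (hc : c ≠ 0) :
    (((v : ℂ) - z) / c).im ≠ 0 := by
  rw [div_ofReal_im, sub_im, ofReal_im, zero_sub]
  exact div_ne_zero (neg_ne_zero.mpr hz) hc

theorem tendsto_sub_div_ofReal_nhdsGT (v E c : ℝ) :
    Tendsto (fun ε : ℝ => ((v : ℂ) - (E + ε * I)) / c) (𝓝[>] 0) (𝓝 (((v - E) / c : ℝ) : ℂ)) := by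
  have hcont : Continuous fun ε : ℝ => ((v : ℂ) - (E + ε * I)) / c := by fun_prop
  simpa using hcont.continuousWithinAt (s := Set.Ioi 0) (x := 0) |>.tendsto

theorem lp.tendsto_cofinite_zero {ι E : Type*} [NormedAddCommGroup E] {p : ℝ≥0∞}
    (hp : 0 < p.toReal) (f : lp (fun _ : ι => E) p) : Tendsto f cofinite (𝓝 0) := by
  have hsum := ((memℓp_gen_iff hp).mp f.2).tendsto_cofinite_zero
  have hroot := ((Real.continuousAt_rpow_const 0 p.toReal⁻¹ (.inr (by positivity))).tendsto).comp
    hsum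
  rw [Real.zero_rpow (inv_ne_zero hp.ne')] at hroot
  refine tendsto_zero_iff_norm_tendsto_zero.mpr (hroot.congr fun i => ?_)
  exact Real.rpow_rpow_inv (norm_nonneg _) hp.ne'

theorem LeadSp.tendsto_apply_atTop_zero {m : ℕ} (b : LeadSp m) (j : Fin m) :
    Tendsto (fun x => b (j, x)) atTop (𝓝 0) := by
  rw [← Nat.cofinite_eq_atTop]
  exact (lp.tendsto_cofinite_zero (by norm_num) b).comp (Prod.mk_right_injective j).tendsto_cofinite

theorem sum_smul_deltaR_apply {m : ℕ} (f : Fin m → ℂ) (j : Fin m) (x : ℕ) :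
    (∑ k, f k • deltaR k 0 : LeadSp m) (j, x) = if x = 0 then f j else 0 := by
  simp only [lp.coeFn_sum, lp.coeFn_smul, Finset.sum_apply, Pi.smul_apply, deltaR,
    lp.single_apply, Pi.single_apply, Prod.mk.injEq, smul_eq_mul, mul_ite, mul_one, mul_zero]
  split_ifs with hx <;> simp [hx]

def geomLeadFun {m : ℕ} (k : Fin m) (r : ℂ) (i : Fin m × ℕ) : ℂ :=
  if i.1 = k then r ^ (i.2 + 1) else 0

theorem memℓp_geomLeadFun {m : ℕ} (k : Fin m) {r : ℂ} (hr : ‖r‖ < 1) :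
    Memℓp (geomLeadFun k r) 2 := by
  refine memℓp_gen ?_
  refine ((Prod.mk_right_injective k).summable_iff fun i hi => ?_).mp ?_
  · have hik : i.1 ≠ k := fun h => hi ⟨i.2, by rw [← h]⟩
    simp [geomLeadFun, hik]
  · have hgeom := (summable_geometric_of_lt_one (by positivity)
      (pow_lt_one₀ (norm_nonneg r) hr two_ne_zero)).mul_left (‖r‖ ^ 2)
    refine hgeom.congr fun x => ?_
    simp only [Function.comp_apply, geomLeadFun, if_true, norm_pow, ENNReal.toReal_ofNat,
      Real.rpow_two]
    ring

def geomLead {m : ℕ} (k : Fin m) {r : ℂ} (hr : ‖r‖ < 1) : LeadSp m :=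
  ⟨geomLeadFun k r, memℓp_geomLeadFun k hr⟩

section LeadHamiltonian

variable {m : ℕ} {cR : ℝ} {hR vR : LeadSp m →L[ℂ] LeadSp m} {v : Fin m → ℝ}

theorem leadHam_apply_zero
    (hR0 : ∀ (ψ : LeadSp m) (j : Fin m), (hR ψ) (j, 0) = -(cR : ℂ) * ψ (j, 1))
    (hvR : ∀ (ψ : LeadSp m) (j : Fin m) (x : ℕ), (vR ψ) (j, x) = (v j : ℂ) * ψ (j, x))
    (g : LeadSp m) (j : Fin m) :
    ((hR + vR) g) (j, 0) = -(cR : ℂ) * g (j, 1) + v j * g (j, 0) := by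
  rw [add_apply, lp.coeFn_add, Pi.add_apply, hR0, hvR]

theorem leadHam_apply_succ
    (hR1 : ∀ (ψ : LeadSp m) (j : Fin m) (x : ℕ),
      (hR ψ) (j, x + 1) = -(cR : ℂ) * (ψ (j, x) + ψ (j, x + 2)))
    (hvR : ∀ (ψ : LeadSp m) (j : Fin m) (x : ℕ), (vR ψ) (j, x) = (v j : ℂ) * ψ (j, x))
    (g : LeadSp m) (j : Fin m) (x : ℕ) :
    ((hR + vR) g) (j, x + 1) = -(cR : ℂ) * (g (j, x) + g (j, x + 2)) + v j * g (j, x + 1) := by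
  rw [add_apply, lp.coeFn_add, Pi.add_apply, hR1, hvR]

theorem lead_recurrence_of_eigen
    (hR0 : ∀ (ψ : LeadSp m) (j : Fin m), (hR ψ) (j, 0) = -(cR : ℂ) * ψ (j, 1))
    (hR1 : ∀ (ψ : LeadSp m) (j : Fin m) (x : ℕ),
      (hR ψ) (j, x + 1) = -(cR : ℂ) * (ψ (j, x) + ψ (j, x + 2)))
    (hvR : ∀ (ψ : LeadSp m) (j : Fin m) (x : ℕ), (vR ψ) (j, x) = (v j : ℂ) * ψ (j, x))
    (hcR : cR ≠ 0) {b : LeadSp m} {f : Fin m → ℂ} {E : ℝ}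
    (heq : (hR + vR) b + ∑ k, f k • deltaR k 0 = (E : ℂ) • b) (j : Fin m) :
    (∀ x, b (j, x) + b (j, x + 2) = ((v j - E) / cR : ℝ) * b (j, x + 1)) ∧
      f j = cR * (b (j, 1) - ((v j - E) / cR : ℝ) * b (j, 0)) := by
  have hcR' : (cR : ℂ) ≠ 0 := ofReal_ne_zero.mpr hcR
  have hat : ∀ i, ((hR + vR) b) i + (∑ k, f k • deltaR k 0 : LeadSp m) i = E * b i := fun i => by
    simpa only [lp.coeFn_add, lp.coeFn_smul, Pi.add_apply, Pi.smul_apply, smul_eq_mul] using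
      congrArg (fun g : LeadSp m => g i) heq
  refine ⟨fun x => ?_, ?_⟩
  · have h := hat (j, x + 1)
    rw [leadHam_apply_succ hR1 hvR, sum_smul_deltaR_apply, if_neg x.succ_ne_zero] at h
    push_cast
    field_simp
    linear_combination -h
  · have h := hat (j, 0)
    rw [leadHam_apply_zero hR0 hvR, sum_smul_deltaR_apply, if_pos rfl] at h
    push_cast
    field_simp
    linear_combination h

theorem resolvent_deltaR
    (hR0 : ∀ (ψ : LeadSp m) (j : Fin m), (hR ψ) (j, 0) = -(cR : ℂ) * ψ (j, 1))
    (hR1 : ∀ (ψ : LeadSp m) (j : Fin m) (x : ℕ),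
      (hR ψ) (j, x + 1) = -(cR : ℂ) * (ψ (j, x) + ψ (j, x + 2)))
    (hvR : ∀ (ψ : LeadSp m) (j : Fin m) (x : ℕ), (vR ψ) (j, x) = (v j : ℂ) * ψ (j, x))
    (hcR : cR ≠ 0) {z : ℂ} {RR : LeadSp m →L[ℂ] LeadSp m} (hRR : RR * ((hR + vR) - z • 1) = 1)
    (k : Fin m) {r : ℂ} (hr : ‖r‖ < 1) (hroot : r * r - ((v k - z) / cR) * r + 1 = 0) :
    RR (deltaR k 0) = (cR : ℂ)⁻¹ • geomLead k hr := by
  have hcR' : (cR : ℂ) ≠ 0 := ofReal_ne_zero.mpr hcR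
  have hroot' : (cR : ℂ) * (r * r + 1) = (v k - z) * r := by
    field_simp at hroot
    linear_combination hroot
  have hsolve : ((hR + vR) - z • 1) (geomLead k hr) = (cR : ℂ) • deltaR k 0 := by
    refine lp.ext (funext fun ⟨j, x⟩ => ?_)
    rw [sub_apply, lp.coeFn_sub, Pi.sub_apply, smul_apply, one_apply_eq_self, lp.coeFn_smul,
      lp.coeFn_smul, Pi.smul_apply, Pi.smul_apply, smul_eq_mul, smul_eq_mul]
    rcases x with _ | x
    · rw [leadHam_apply_zero hR0 hvR]
      by_cases hjk : j = k
      · subst hjk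
        simp only [geomLead, geomLeadFun, deltaR, lp.single_apply_self, if_true]
        linear_combination -hroot'
      · simp [geomLead, geomLeadFun, deltaR, lp.single_apply, hjk]
    · rw [leadHam_apply_succ hR1 hvR]
      by_cases hjk : j = k
      · subst hjk
        simp only [geomLead, geomLeadFun, deltaR, lp.single_apply, if_true]
        simp only [Pi.single_apply, Prod.mk.injEq, Nat.add_one_ne_zero, and_false, if_false]
        linear_combination -(r ^ (x + 1)) * hroot'
      · simp [geomLead, geomLeadFun, deltaR, lp.single_apply, hjk]
  calc RR (deltaR k 0) = (cR : ℂ)⁻¹ • RR ((cR : ℂ) • deltaR k 0) := by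
        rw [map_smul, inv_smul_smul₀ hcR']
    _ = (cR : ℂ)⁻¹ • geomLead k hr := by rw [← hsolve, ← mul_apply_eq_comp, hRR, one_apply_eq_self]

theorem resolvent_sum_deltaR_apply_zero
    (hR0 : ∀ (ψ : LeadSp m) (j : Fin m), (hR ψ) (j, 0) = -(cR : ℂ) * ψ (j, 1))
    (hR1 : ∀ (ψ : LeadSp m) (j : Fin m) (x : ℕ),
      (hR ψ) (j, x + 1) = -(cR : ℂ) * (ψ (j, x) + ψ (j, x + 2)))
    (hvR : ∀ (ψ : LeadSp m) (j : Fin m) (x : ℕ), (vR ψ) (j, x) = (v j : ℂ) * ψ (j, x))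
    (hcR : cR ≠ 0) {z : ℂ} (hz : z.im ≠ 0) {RR : LeadSp m →L[ℂ] LeadSp m}
    (hRR : RR * ((hR + vR) - z • 1) = 1) (f : Fin m → ℂ) (j : Fin m) :
    (RR (∑ k, f k • deltaR k 0)) (j, 0) = f j * smallRoot (((v j : ℂ) - z) / cR) / cR := by
  have hres k := resolvent_deltaR hR0 hR1 hvR hcR hRR k
    (smallRoot_spec (im_sub_div_ofReal_ne_zero hz (v k) hcR)).2
    (smallRoot_spec (im_sub_div_ofReal_ne_zero hz (v k) hcR)).1
  simp only [map_sum, map_smul, hres, lp.coeFn_sum, lp.coeFn_smul, Finset.sum_apply,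
    Pi.smul_apply, smul_eq_mul, geomLead, geomLeadFun]
  rw [Finset.sum_eq_single j (fun k _ hkj => by simp [Ne.symm hkj]) (by simp)]
  simp only [if_true, zero_add, pow_one]
  field_simp

end LeadHamiltonian

section Coupling

variable {S : Type} [Fintype S] {m : ℕ} {φ : Fin m → SampSp S} {d : Fin m → ℝ}
  {hT : FullSp S m →L[ℂ] FullSp S m}

@[simp] theorem prjS_emb (p : SampSp S × LeadSp m) : prjS (emb p) = p.1 := rfl

@[simp] theorem prjR_emb (p : SampSp S × LeadSp m) : prjR (emb p) = p.2 := rfl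

theorem eigen_components {hS : SampSp S →L[ℂ] SampSp S} {hR vR : LeadSp m →L[ℂ] LeadSp m}
    (hhT : ∀ (a : SampSp S) (b : LeadSp m),
      hT (emb (a, b)) = emb
        (∑ j : Fin m, (d j : ℂ) • (b (j, 0) • φ j),
         ∑ j : Fin m, (d j : ℂ) • ((inner ℂ (φ j) a : ℂ) • deltaR j 0)))
    {hD : FullSp S m →L[ℂ] FullSp S m}
    (hhD : ∀ (a : SampSp S) (b : LeadSp m), hD (emb (a, b)) = emb (hS a, (hR + vR) b))
    {E : ℂ} {ψ : FullSp S m} (hψ : (hD + hT) ψ = E • ψ) :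
    hS (prjS ψ) + ∑ j, (d j * (prjR ψ) (j, 0)) • φ j = E • prjS ψ ∧
      (hR + vR) (prjR ψ) + ∑ j, (d j * inner ℂ (φ j) (prjS ψ)) • deltaR j 0 = E • prjR ψ := by
  rw [add_apply, show ψ = emb (prjS ψ, prjR ψ) from rfl, hhD, hhT] at hψ
  simp only [← smul_smul]
  exact ⟨congrArg prjS hψ, congrArg prjR hψ⟩

theorem selfEnergy_apply {cR : ℝ} {hR vR : LeadSp m →L[ℂ] LeadSp m} {v : Fin m → ℝ}
    (hR0 : ∀ (ψ : LeadSp m) (j : Fin m), (hR ψ) (j, 0) = -(cR : ℂ) * ψ (j, 1))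
    (hR1 : ∀ (ψ : LeadSp m) (j : Fin m) (x : ℕ),
      (hR ψ) (j, x + 1) = -(cR : ℂ) * (ψ (j, x) + ψ (j, x + 2)))
    (hvR : ∀ (ψ : LeadSp m) (j : Fin m) (x : ℕ), (vR ψ) (j, x) = (v j : ℂ) * ψ (j, x))
    (hcR : cR ≠ 0)
    (hhT : ∀ (a : SampSp S) (b : LeadSp m),
      hT (emb (a, b)) = emb
        (∑ j : Fin m, (d j : ℂ) • (b (j, 0) • φ j),
         ∑ j : Fin m, (d j : ℂ) • ((inner ℂ (φ j) a : ℂ) • deltaR j 0)))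
    {z : ℂ} (hz : z.im ≠ 0) {RR : LeadSp m →L[ℂ] LeadSp m}
    (hRR : RR * ((hR + vR) - z • 1) = 1) (a : SampSp S) :
    prjS (hT (emb (0, RR (prjR (hT (emb (a, 0))))))) =
      ∑ j, (d j * (d j * inner ℂ (φ j) a) * smallRoot (((v j : ℂ) - z) / cR) / cR) • φ j := by
  have hout : prjR (hT (emb (a, 0))) = ∑ j, (d j * inner ℂ (φ j) a) • deltaR j 0 := by
    simp only [hhT, prjR_emb, smul_smul]
  rw [hout, hhT]
  simp only [prjS_emb, smul_smul,
    resolvent_sum_deltaR_apply_zero hR0 hR1 hvR hcR hz hRR]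
  congr! 2
  ring

theorem tendsto_neg_selfEnergy_apply {cR : ℝ} {hR vR : LeadSp m →L[ℂ] LeadSp m} {v : Fin m → ℝ}
    (hR0 : ∀ (ψ : LeadSp m) (j : Fin m), (hR ψ) (j, 0) = -(cR : ℂ) * ψ (j, 1))
    (hR1 : ∀ (ψ : LeadSp m) (j : Fin m) (x : ℕ),
      (hR ψ) (j, x + 1) = -(cR : ℂ) * (ψ (j, x) + ψ (j, x + 2)))
    (hvR : ∀ (ψ : LeadSp m) (j : Fin m) (x : ℕ), (vR ψ) (j, x) = (v j : ℂ) * ψ (j, x))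
    (hcR : cR ≠ 0)
    (hhT : ∀ (a : SampSp S) (b : LeadSp m),
      hT (emb (a, b)) = emb
        (∑ j : Fin m, (d j : ℂ) • (b (j, 0) • φ j),
         ∑ j : Fin m, (d j : ℂ) • ((inner ℂ (φ j) a : ℂ) • deltaR j 0)))
    {RR : ℂ → (LeadSp m →L[ℂ] LeadSp m)}
    (hRR : ∀ z : ℂ, z.im ≠ 0 → RR z * ((hR + vR) - z • 1) = 1) (E : ℝ) {a : SampSp S}
    {b : LeadSp m} (hrec : ∀ j x, b (j, x) + b (j, x + 2) = ((v j - E) / cR : ℝ) * b (j, x + 1))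
    (hbdry : ∀ j, d j * inner ℂ (φ j) a = cR * (b (j, 1) - ((v j - E) / cR : ℝ) * b (j, 0))) :
    Tendsto (fun ε : ℝ => -prjS (hT (emb (0, RR (E + ε * I) (prjR (hT (emb (a, 0))))))))
      (𝓝[>] 0) (𝓝 (∑ j, (d j * b (j, 0)) • φ j)) := by
  have hpos : ∀ᶠ ε : ℝ in 𝓝[>] 0, ((E : ℂ) + ε * I).im ≠ 0 := by
    filter_upwards [self_mem_nhdsWithin] with ε hε
    simpa using hε.ne'
  have hlead j := tendsto_boundary_mul_smallRoot (hrec j) (b.tendsto_apply_atTop_zero j)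
    (tendsto_sub_div_ofReal_nhdsGT (v j) E cR)
    (hpos.mono fun _ hε => im_sub_div_ofReal_ne_zero hε (v j) hcR)
  refine (tendsto_finsetSum _ fun j _ => ((hlead j).const_mul (d j : ℂ)).smul_const (φ j)).congr' ?_
  filter_upwards [hpos] with ε hε
  rw [selfEnergy_apply hR0 hR1 hvR hcR hhT hε (hRR _ hε), ← Finset.sum_neg_distrib]
  refine Finset.sum_congr rfl fun j _ => ?_
  rw [hbdry, ← neg_smul]
  congr 1
  field_simp [ofReal_ne_zero.mpr hcR]
  ring

end Coupling

theorem coupled_hamiltonian_no_eigenvalues_general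
    {S : Type} [Fintype S]
    (m : ℕ)
    (cR : ℝ) (hcR : 0 < cR)
    (hS : SampSp S →L[ℂ] SampSp S)
    (hR : LeadSp m →L[ℂ] LeadSp m)
    (hR0 : ∀ (ψ : LeadSp m) (j : Fin m), (hR ψ) (j, 0) = -(cR : ℂ) * ψ (j, 1))
    (hR1 : ∀ (ψ : LeadSp m) (j : Fin m) (x : ℕ),
      (hR ψ) (j, x + 1) = -(cR : ℂ) * (ψ (j, x) + ψ (j, x + 2)))
    (φ : Fin m → SampSp S)
    (d : Fin m → ℝ) (v : Fin m → ℝ)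
    (vR : LeadSp m →L[ℂ] LeadSp m)
    (hvR : ∀ (ψ : LeadSp m) (j : Fin m) (x : ℕ), (vR ψ) (j, x) = (v j : ℂ) * ψ (j, x))
    (hT : FullSp S m →L[ℂ] FullSp S m)
    (hhT : ∀ (a : SampSp S) (b : LeadSp m),
      hT (emb (a, b)) = emb
        (∑ j : Fin m, (d j : ℂ) • (b (j, 0) • φ j),
         ∑ j : Fin m, (d j : ℂ) • ((inner ℂ (φ j) a : ℂ) • deltaR j 0)))
    (hD : FullSp S m →L[ℂ] FullSp S m)
    (hhD : ∀ (a : SampSp S) (b : LeadSp m), hD (emb (a, b)) = emb (hS a, (hR + vR) b))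
    (hv : FullSp S m →L[ℂ] FullSp S m) (hhv : hv = hD + hT)
    (RR : ℂ → (LeadSp m →L[ℂ] LeadSp m))
    (hRR : ∀ z : ℂ, z.im ≠ 0 →
      ((hR + vR) - z • 1) * RR z = 1 ∧ RR z * ((hR + vR) - z • 1) = 1)
    (cmp : ℂ → (SampSp S →L[ℂ] SampSp S))
    (hcmp : ∀ z : ℂ, z.im ≠ 0 → ∀ f : SampSp S,
      cmp z f = prjS (hT (emb (0, RR z (prjR (hT (emb (f, 0))))))))
    (vS : ℝ → (SampSp S →L[ℂ] SampSp S))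
    (hvS : ∀ E : ℝ,
      Tendsto (fun ε : ℝ => -cmp ((E : ℂ) + (ε : ℂ) * I))
        (nhdsWithin 0 (Set.Ioi 0)) (nhds (vS E)))
    (hSP : ∀ E : ℝ, IsUnit (hS + vS E - (E : ℂ) • 1))
    : ∀ (E : ℝ) (ψ : FullSp S m), hv ψ = (E : ℂ) • ψ → ψ = 0 := by
  intro E ψ hψ
  subst hhv
  obtain ⟨hsample, hlead⟩ := eigen_components hhT hhD hψ
  have hcR0 : cR ≠ 0 := hcR.ne'
  have hrec j := (lead_recurrence_of_eigen hR0 hR1 hvR hcR0 hlead j).1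
  have hbdry j := (lead_recurrence_of_eigen hR0 hR1 hvR hcR0 hlead j).2
  have hvS_apply : vS E (prjS ψ) = ∑ j, (d j * prjR ψ (j, 0)) • φ j := by
    refine tendsto_nhds_unique (((ContinuousLinearMap.apply ℂ _ _).continuous.tendsto _).comp
      (hvS E)) ((tendsto_neg_selfEnergy_apply hR0 hR1 hvR hcR0 hhT (fun z hz => (hRR z hz).2) E
        hrec hbdry).congr' ?_)
    filter_upwards [self_mem_nhdsWithin] with ε hε
    rw [Function.comp_apply, ContinuousLinearMap.apply_apply, neg_apply,
      hcmp _ (by simpa using hε.ne')]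
  have hsample_zero : prjS ψ = 0 := by
    refine (injective_iff_map_eq_zero _).mp
      (ContinuousLinearMap.isUnit_iff_bijective.mp (hSP E)).1 _ ?_
    rw [sub_apply, add_apply, hvS_apply, smul_apply, one_apply_eq_self, ← hsample, sub_self]
  have hlead_zero : prjR ψ = 0 := by
    refine lp.ext (funext fun ⟨j, x⟩ =>
      eq_zero_of_dirichlet (hrec j) ((prjR ψ).tendsto_apply_atTop_zero j) ?_ x)
    have h := hbdry j
    rw [hsample_zero, inner_zero_right, mul_zero, zero_eq_mul] at h
    exact sub_eq_zero.mp (h.resolve_left (ofReal_ne_zero.mpr hcR0))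
  change emb (prjS ψ, prjR ψ) = 0
  rw [hsample_zero, hlead_zero]
  rfl

/-- under the spectral condition (SP_v), the coupled one-particle Hamiltonian
`h_v` has no eigenvalues. -/
theorem coupled_hamiltonian_no_eigenvalues
    {S : Type} [Fintype S] [DecidableEq S] [Nonempty S]
    (m : ℕ) (hm : 0 < m)
    (cR : ℝ) (hcR : 0 < cR)
    (hS : SampSp S →L[ℂ] SampSp S) (hSsa : IsSelfAdjoint hS)
    (hR : LeadSp m →L[ℂ] LeadSp m)
    (hR0 : ∀ (ψ : LeadSp m) (j : Fin m), (hR ψ) (j, 0) = -(cR : ℂ) * ψ (j, 1))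
    (hR1 : ∀ (ψ : LeadSp m) (j : Fin m) (x : ℕ),
      (hR ψ) (j, x + 1) = -(cR : ℂ) * (ψ (j, x) + ψ (j, x + 2)))
    (φ : Fin m → SampSp S) (hφ : ∀ j, ‖φ j‖ = 1)
    (d : Fin m → ℝ) (v : Fin m → ℝ)
    (vR : LeadSp m →L[ℂ] LeadSp m)
    (hvR : ∀ (ψ : LeadSp m) (j : Fin m) (x : ℕ), (vR ψ) (j, x) = (v j : ℂ) * ψ (j, x))
    (hT : FullSp S m →L[ℂ] FullSp S m)
    (hhT : ∀ (a : SampSp S) (b : LeadSp m),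
      hT (emb (a, b)) = emb
        (∑ j : Fin m, (d j : ℂ) • (b (j, 0) • φ j),
         ∑ j : Fin m, (d j : ℂ) • ((inner ℂ (φ j) a : ℂ) • deltaR j 0)))
    (hD : FullSp S m →L[ℂ] FullSp S m)
    (hhD : ∀ (a : SampSp S) (b : LeadSp m), hD (emb (a, b)) = emb (hS a, (hR + vR) b))
    (hv : FullSp S m →L[ℂ] FullSp S m) (hhv : hv = hD + hT)
    (RR : ℂ → (LeadSp m →L[ℂ] LeadSp m))
    (hRR : ∀ z : ℂ, z.im ≠ 0 →
      ((hR + vR) - z • 1) * RR z = 1 ∧ RR z * ((hR + vR) - z • 1) = 1)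
    (cmp : ℂ → (SampSp S →L[ℂ] SampSp S))
    (hcmp : ∀ z : ℂ, z.im ≠ 0 → ∀ f : SampSp S,
      cmp z f = prjS (hT (emb (0, RR z (prjR (hT (emb (f, 0))))))))
    (vS : ℝ → (SampSp S →L[ℂ] SampSp S))
    (hvS : ∀ E : ℝ,
      Tendsto (fun ε : ℝ => -cmp ((E : ℂ) + (ε : ℂ) * I))
        (nhdsWithin 0 (Set.Ioi 0)) (nhds (vS E)))
    (hSP : ∀ E : ℝ, IsUnit (hS + vS E - (E : ℂ) • 1))
    : ∀ (E : ℝ) (ψ : FullSp S m), hv ψ = (E : ℂ) • ψ → ψ = 0 :=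
  coupled_hamiltonian_no_eigenvalues_general m cR hcR hS hR hR0 hR1 φ d v vR hvR hT hhT hD hhD hv
    hhv RR hRR cmp hcmp vS hvS hSP
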